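/- If V is a proximal subgradient of f∘λ at X (f lsc, symmetric, lower-bounded, λ(X) in the domain of f), then there exists α > 0 with X ∈ P_α(f∘λ)(X + αV), and consequently X and V commute. -/

import Mathlib

open Matrix

/-- The vector of eigenvalues of a symmetric matrix, listed in nonincreasing order
(junk value `0` for non-Hermitian matrices). -/
noncomputable def eigd {n : ℕ} (X : Matrix (Fin n) (Fin n) ℝ) : Fin n → ℝ :=
  if h : X.IsHermitian then
    fun i => h.eigenvalues (Tuple.sort h.eigenvalues i.rev)
  else 0

/-- A function on `ℝⁿ` is symmetric if it is invariant under coordinate permutations. -/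
def IsSymmFn {n : ℕ} (f : (Fin n → ℝ) → EReal) : Prop :=
  ∀ (π : Equiv.Perm (Fin n)) (x : Fin n → ℝ), f (fun i => x (π i)) = f x

/-- Moreau envelope on `ℝⁿ` (Euclidean norm). -/
noncomputable def mEnvV {n : ℕ} (f : (Fin n → ℝ) → EReal) (α : ℝ) (x : Fin n → ℝ) : EReal :=
  ⨅ y : Fin n → ℝ, f y + (((∑ i, (y i - x i) ^ 2) / (2 * α) : ℝ) : EReal)

/-- Proximal mapping on `ℝⁿ` (Euclidean norm). -/
def proxV {n : ℕ} (f : (Fin n → ℝ) → EReal) (α : ℝ) (x : Fin n → ℝ) : Set (Fin n → ℝ) :=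
  {y | ∀ z, f y + (((∑ i, (y i - x i) ^ 2) / (2 * α) : ℝ) : EReal)
      ≤ f z + (((∑ i, (z i - x i) ^ 2) / (2 * α) : ℝ) : EReal)}

/-- Moreau envelope of the spectral function `f ∘ λ` on the space of symmetric
matrices, with respect to the Frobenius norm. -/
noncomputable def mEnvS {n : ℕ} (f : (Fin n → ℝ) → EReal) (α : ℝ)
    (X : Matrix (Fin n) (Fin n) ℝ) : EReal :=
  ⨅ Y : {Y : Matrix (Fin n) (Fin n) ℝ // Y.IsHermitian},
    f (eigd Y.1) + (((((Y.1 - X)ᵀ * (Y.1 - X)).trace) / (2 * α) : ℝ) : EReal)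

/-- Proximal mapping of the spectral function `f ∘ λ` on the space of symmetric
matrices, with respect to the Frobenius norm. -/
def proxS {n : ℕ} (f : (Fin n → ℝ) → EReal) (α : ℝ)
    (X : Matrix (Fin n) (Fin n) ℝ) : Set (Matrix (Fin n) (Fin n) ℝ) :=
  {Y | Y.IsHermitian ∧ ∀ Z : Matrix (Fin n) (Fin n) ℝ, Z.IsHermitian →
    f (eigd Y) + ((((Y - X)ᵀ * (Y - X)).trace / (2 * α) : ℝ) : EReal)
      ≤ f (eigd Z) + ((((Z - X)ᵀ * (Z - X)).trace / (2 * α) : ℝ) : EReal)}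

/-- `V` is a proximal subgradient of `F` (a function on symmetric matrices) at the
symmetric matrix `X`: for some `r, ε > 0`,
`F(Y) ≥ F(X) + ⟨V, Y−X⟩ − (r/2)‖Y−X‖²` for all symmetric `Y` with `‖Y−X‖ ≤ ε`. -/
def ProxSubM {n : ℕ} (F : Matrix (Fin n) (Fin n) ℝ → EReal)
    (X V : Matrix (Fin n) (Fin n) ℝ) : Prop :=
  ∃ r ε : ℝ, 0 < r ∧ 0 < ε ∧ ∀ Y : Matrix (Fin n) (Fin n) ℝ, Y.IsHermitian →
    Real.sqrt (((Y - X)ᵀ * (Y - X)).trace) ≤ ε →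
    F X + (((V * (Y - X)).trace - r / 2 * ((Y - X)ᵀ * (Y - X)).trace : ℝ) : EReal)
      ≤ F Y

/-!
For small `α`, the local proximal inequality near `X` and the lower bound on `f` far from `X`
combine into the global inequality `f(λ Y) ≥ f(λ X) + ⟨V, Y - X⟩ - ‖Y - X‖² / (2α)`, which after
completing the square says exactly that `X ∈ P_α(f∘λ)(X + αV)`.

Since `f∘λ` is constant on the orthogonal orbit `{U X Uᵀ}`, `X` is then a point of its orbit
nearest to `W = X + αV`, so `t ↦ tr (e^{tS} X e^{-tS} W)` is maximal at `t = 0`, where `S = XW - WX`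
is skew. Its derivative there is `tr (S S) = -‖S‖²`, hence `S = 0`, and `X` commutes with `W`,
hence with `V`.
-/

namespace Matrix

variable {m : Type*} [Fintype m]

theorem trace_transpose_mul_self_nonneg (A : Matrix m m ℝ) : 0 ≤ (Aᵀ * A).trace := by
  simpa [conjTranspose_eq_transpose_of_trivial] using
    (posSemidef_conjTranspose_mul_self A).trace_nonneg

theorem trace_transpose_mul_self_eq_zero_iff {A : Matrix m m ℝ} :
    (Aᵀ * A).trace = 0 ↔ A = 0 := by
  simpa [conjTranspose_eq_transpose_of_trivial] using
    trace_conjTranspose_mul_self_eq_zero_iff (A := A)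

theorem trace_transpose_mul_comm (A B : Matrix m m ℝ) : (Bᵀ * A).trace = (Aᵀ * B).trace := by
  rw [← trace_transpose, transpose_mul, transpose_transpose]

theorem trace_transpose_mul_self_sub (A B : Matrix m m ℝ) :
    ((A - B)ᵀ * (A - B)).trace = (Aᵀ * A).trace - 2 * (Aᵀ * B).trace + (Bᵀ * B).trace := by
  rw [transpose_sub, sub_mul, mul_sub, mul_sub, trace_sub, trace_sub, trace_sub,
    trace_transpose_mul_comm A B]
  ring

theorem trace_transpose_mul_self_smul (c : ℝ) (A : Matrix m m ℝ) :
    ((c • A)ᵀ * (c • A)).trace = c ^ 2 * (Aᵀ * A).trace := by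
  rw [transpose_smul, smul_mul_smul_comm, trace_smul, smul_eq_mul, sq]

/-- Young's inequality for the Frobenius pairing. -/
theorem trace_mul_le {α : ℝ} (hα : 0 < α) (A B : Matrix m m ℝ) :
    (A * B).trace ≤ (Bᵀ * B).trace / (4 * α) + α * (Aᵀ * A).trace := by
  have h := trace_transpose_mul_self_nonneg (Bᵀ - (2 * α) • A)
  rw [trace_transpose_mul_self_sub, trace_transpose_mul_self_smul, transpose_transpose,
    Matrix.mul_smul, trace_smul, smul_eq_mul, trace_mul_comm B A, trace_mul_comm B Bᵀ] at h
  rw [div_add' _ _ _ (by positivity), le_div_iff₀ (by positivity)]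
  nlinarith

theorem IsHermitian.mul_mul_transpose {X : Matrix m m ℝ} (hX : X.IsHermitian) (U : Matrix m m ℝ) :
    (U * X * Uᵀ).IsHermitian := by
  simpa [conjTranspose_eq_transpose_of_trivial] using isHermitian_mul_mul_conjTranspose U hX

variable [DecidableEq m]

theorem trace_transpose_mul_self_conj {U : Matrix m m ℝ} (hU : U * Uᵀ = 1) (A : Matrix m m ℝ) :
    ((U * A * Uᵀ)ᵀ * (U * A * Uᵀ)).trace = (Aᵀ * A).trace := by
  have hU' : Uᵀ * U = 1 := mul_eq_one_comm.mp hU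
  simp only [transpose_mul, transpose_transpose, Matrix.mul_assoc]
  rw [← Matrix.mul_assoc Uᵀ U, hU', Matrix.one_mul, trace_mul_comm, Matrix.mul_assoc,
    Matrix.mul_assoc, hU', Matrix.mul_one]

open scoped Matrix.Norms.Operator in
theorem commute_of_forall_trace_conj_mul_le {X W : Matrix m m ℝ} (hX : X.IsSymm) (hW : W.IsSymm)
    (hmax : ∀ U : Matrix m m ℝ, U * Uᵀ = 1 → (U * X * Uᵀ * W).trace ≤ (X * W).trace) :
    X * W = W * X := by
  set S := X * W - W * X with hS
  have hS_skew : Sᵀ = -S := by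
    rw [hS, transpose_sub, transpose_mul, transpose_mul, hX.eq, hW.eq, neg_sub]
  have hexp_transpose (t : ℝ) : (NormedSpace.exp (t • S))ᵀ = NormedSpace.exp (t • -S) := by
    rw [← exp_transpose, transpose_smul, hS_skew]
  have hexp_orth (t : ℝ) : NormedSpace.exp (t • S) * (NormedSpace.exp (t • S))ᵀ = 1 := by
    rw [hexp_transpose, smul_neg, ← exp_add_of_commute _ _ (Commute.refl (t • S)).neg_right,
      add_neg_cancel, NormedSpace.exp_zero]
  -- `t ↦ exp (t S) X exp (-t S)` runs through the orthogonal orbit of `X`, and its pairing with `W`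
  -- has derivative `tr (S S) = -‖S‖²` at `0`
  let g : ℝ → ℝ := fun t =>
    (NormedSpace.exp (t • S) * X * NormedSpace.exp (t • -S) * W).trace
  have hg_max : IsLocalMax g 0 := Filter.Eventually.of_forall fun t => by
    have h := hmax _ (hexp_orth t)
    rw [hexp_transpose] at h
    simpa [g] using h
  have hg_deriv : HasDerivAt g (S * S).trace 0 := by
    have h := (((hasDerivAt_exp_smul_const S (0 : ℝ)).mul_const X).mul
      (hasDerivAt_exp_smul_const (-S) (0 : ℝ))).mul_const W
    refine ((traceLinearMap m ℝ ℝ).toContinuousLinearMap.hasFDerivAt.comp_hasDerivAt 0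
      h).congr_deriv ?_
    simp only [zero_smul, NormedSpace.exp_zero, Matrix.one_mul, Matrix.mul_one]
    have hcomm_trace (T : Matrix m m ℝ) :
        ((T * X + X * -T) * W).trace = (T * (X * W - W * X)).trace := by
      rw [Matrix.mul_neg, ← sub_eq_add_neg, Matrix.sub_mul, Matrix.mul_sub, trace_sub, trace_sub,
        Matrix.mul_assoc, Matrix.mul_assoc, trace_mul_comm X, Matrix.mul_assoc]
    exact hcomm_trace S
  have hSS : (Sᵀ * S).trace = 0 := by
    rw [hS_skew, Matrix.neg_mul, trace_neg, hg_max.hasDerivAt_eq_zero hg_deriv, neg_zero]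
  exact sub_eq_zero.mp (trace_transpose_mul_self_eq_zero_iff.mp hSS)

end Matrix

open Filter Topology

theorem eigd_eq_of_charpoly_eq {n : ℕ} {A B : Matrix (Fin n) (Fin n) ℝ} (hA : A.IsHermitian)
    (hB : B.IsHermitian) (h : A.charpoly = B.charpoly) : eigd A = eigd B := by
  have heig := (hA.eigenvalues_eq_eigenvalues_iff hB).mpr h
  rw [eigd, eigd, dif_pos hA, dif_pos hB, heig]

theorem eigd_conj {n : ℕ} {X U : Matrix (Fin n) (Fin n) ℝ} (hX : X.IsHermitian)
    (hU : U * Uᵀ = 1) : eigd (U * X * Uᵀ) = eigd X :=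
  eigd_eq_of_charpoly_eq (hX.mul_mul_transpose U) hX <| by
    rw [charpoly_mul_comm, ← Matrix.mul_assoc, mul_eq_one_comm.mp hU, Matrix.one_mul]

theorem ProxSubM.exists_forall_le {n : ℕ} {F : Matrix (Fin n) (Fin n) ℝ → EReal}
    {X V : Matrix (Fin n) (Fin n) ℝ} {fx : ℝ} (hFX : F X = fx)
    (hbdd : ∃ c : ℝ, ∀ Y, (c : EReal) ≤ F Y) (hV : ProxSubM F X V) :
    ∃ α > 0, ∀ Y : Matrix (Fin n) (Fin n) ℝ, Y.IsHermitian →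
      F X + (((V * (Y - X)).trace - ((Y - X)ᵀ * (Y - X)).trace / (2 * α) : ℝ) : EReal) ≤ F Y := by
  obtain ⟨c, hc⟩ := hbdd
  obtain ⟨r, ε, hr, hε, hloc⟩ := hV
  set v := (Vᵀ * V).trace
  have hsmall : ∀ᶠ α in 𝓝[>] (0 : ℝ), α * r < 1 ∧ 4 * α * (fx - c + α * v) < ε ^ 2 := by
    refine nhdsWithin_le_nhds (Eventually.and ?_ ?_)
    · exact (Continuous.tendsto' (by fun_prop) 0 0 (by simp)).eventually (gt_mem_nhds one_pos)
    · exact (Continuous.tendsto' (by fun_prop) 0 0 (by simp)).eventually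
        (gt_mem_nhds (by positivity))
  obtain ⟨α, ⟨hαr, hαε⟩, hα⟩ := (hsmall.and self_mem_nhdsWithin).exists
  refine ⟨α, hα, fun Y hY => ?_⟩
  set u := ((Y - X)ᵀ * (Y - X)).trace
  set t := (V * (Y - X)).trace
  have hu : 0 ≤ u := trace_transpose_mul_self_nonneg _
  rw [hFX, ← EReal.coe_add]
  by_cases hnear : √u ≤ ε
  · refine le_trans (EReal.coe_le_coe_iff.mpr ?_) (hFX ▸ hloc Y hY hnear)
    have hru : r / 2 * u ≤ u / (2 * α) := by
      rw [le_div_iff₀ (by positivity)]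
      nlinarith
    linarith
  · have hεu : ε ^ 2 < u := (Real.lt_sqrt hε.le).mp (not_le.mp hnear)
    have hyoung := trace_mul_le hα V (Y - X)
    have hfar : fx - c + α * v ≤ u / (4 * α) := by
      rw [le_div_iff₀ (by positivity)]
      nlinarith
    refine le_trans (EReal.coe_le_coe_iff.mpr ?_) (hc Y)
    have hhalf : u / (2 * α) = 2 * (u / (4 * α)) := by field_simp; ring
    linarith

theorem mem_proxS_of_forall_le {n : ℕ} {f : (Fin n → ℝ) → EReal} {X V : Matrix (Fin n) (Fin n) ℝ}
    {α fx : ℝ} (hα : 0 < α) (hX : X.IsHermitian) (hfx : f (eigd X) = fx)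
    (h : ∀ Y : Matrix (Fin n) (Fin n) ℝ, Y.IsHermitian →
      (fx : EReal) + (((V * (Y - X)).trace - ((Y - X)ᵀ * (Y - X)).trace / (2 * α) : ℝ) : EReal)
        ≤ f (eigd Y)) :
    X ∈ proxS f α (X + α • V) := by
  refine ⟨hX, fun Y hY => ?_⟩
  have hX' : ((X - (X + α • V))ᵀ * (X - (X + α • V))).trace = α ^ 2 * (Vᵀ * V).trace := by
    rw [sub_add_cancel_left, transpose_neg, neg_mul_neg, trace_transpose_mul_self_smul]
  have hY' : ((Y - (X + α • V))ᵀ * (Y - (X + α • V))).trace = ((Y - X)ᵀ * (Y - X)).trace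
      - 2 * α * (V * (Y - X)).trace + α ^ 2 * (Vᵀ * V).trace := by
    have hpair : ((Y - X)ᵀ * V).trace = (V * (Y - X)).trace := by
      rw [(isHermitian_iff_isSymm.mp (hY.sub hX)).eq, trace_mul_comm]
    rw [← sub_sub, trace_transpose_mul_self_sub, trace_transpose_mul_self_smul, Matrix.mul_smul,
      trace_smul, hpair, smul_eq_mul, mul_assoc]
  rw [hfx, hX', hY']
  calc (fx : EReal) + ((α ^ 2 * (Vᵀ * V).trace / (2 * α) : ℝ) : EReal)
      = ((fx + ((V * (Y - X)).trace - ((Y - X)ᵀ * (Y - X)).trace / (2 * α)) : ℝ) : EReal)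
        + (((((Y - X)ᵀ * (Y - X)).trace - 2 * α * (V * (Y - X)).trace
          + α ^ 2 * (Vᵀ * V).trace) / (2 * α) : ℝ) : EReal) := by
        rw [← EReal.coe_add, ← EReal.coe_add]
        congr 1
        field_simp
        ring
    _ ≤ _ := by gcongr; exact h Y hY

theorem trace_conj_mul_le_of_mem_proxS {n : ℕ} {f : (Fin n → ℝ) → EReal}
    {X W U : Matrix (Fin n) (Fin n) ℝ} {α fx : ℝ} (hα : 0 < α) (hX : X.IsHermitian)
    (hfx : f (eigd X) = fx) (hprox : X ∈ proxS f α W) (hU : U * Uᵀ = 1) :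
    (U * X * Uᵀ * W).trace ≤ (X * W).trace := by
  have h := hprox.2 _ (hX.mul_mul_transpose U)
  rw [eigd_conj hX hU, hfx, ← EReal.coe_add, ← EReal.coe_add, EReal.coe_le_coe_iff,
    add_le_add_iff_left, div_le_div_iff_of_pos_right (by positivity),
    trace_transpose_mul_self_sub, trace_transpose_mul_self_sub, trace_transpose_mul_self_conj hU,
    (isHermitian_iff_isSymm.mp hX).eq, (isHermitian_iff_isSymm.mp (hX.mul_mul_transpose U)).eq] at h
  linarith

theorem statement14_general {n : ℕ} (f : (Fin n → ℝ) → EReal)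
    (hbdd : ∃ c : ℝ, ∀ y, (c : EReal) ≤ f y)
    (X : Matrix (Fin n) (Fin n) ℝ) (hX : X.IsHermitian)
    (fx : ℝ) (hfx : f (eigd X) = (fx : EReal))
    (V : Matrix (Fin n) (Fin n) ℝ) (hVsymm : V.IsHermitian)
    (hV : ProxSubM (fun M => f (eigd M)) X V) :
    (∃ α : ℝ, 0 < α ∧ X ∈ proxS f α (X + α • V)) ∧ X * V = V * X := by
  obtain ⟨α, hα, hglobal⟩ := hV.exists_forall_le hfx (hbdd.imp fun c hc Y => hc (eigd Y))
  have hprox : X ∈ proxS f α (X + α • V) :=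
    mem_proxS_of_forall_le hα hX hfx fun Y hY => hfx ▸ hglobal Y hY
  refine ⟨⟨α, hα, hprox⟩, ?_⟩
  have hcomm : Commute X (X + α • V) :=
    commute_of_forall_trace_conj_mul_le (isHermitian_iff_isSymm.mp hX)
      (isHermitian_iff_isSymm.mp (hX.add (hVsymm.smul (IsSelfAdjoint.all α))))
      fun U hU => trace_conj_mul_le_of_mem_proxS hα hX hfx hprox hU
  have hcommV : Commute X V := by
    simpa [inv_smul_smul₀ hα.ne'] using ((hcomm.sub_right (Commute.refl X)).smul_right α⁻¹)
  exact hcommV.eq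

/-- If `V` is a proximal subgradient of `f∘λ` at `X` (for `f` lsc, symmetric,
lower-bounded, with `f(λ(X))` finite), then `X ∈ P_α(f∘λ)(X + αV)` for some `α > 0`,
and consequently `X` and `V` commute. -/
theorem statement14 {n : ℕ} (f : (Fin n → ℝ) → EReal)
    (hlsc : LowerSemicontinuous f) (hsym : IsSymmFn f)
    (hbdd : ∃ c : ℝ, ∀ y, (c : EReal) ≤ f y)
    (X : Matrix (Fin n) (Fin n) ℝ) (hX : X.IsHermitian)
    (fx : ℝ) (hfx : f (eigd X) = (fx : EReal))
    (V : Matrix (Fin n) (Fin n) ℝ) (hVsymm : V.IsHermitian)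
    (hV : ProxSubM (fun M => f (eigd M)) X V) :
    (∃ α : ℝ, 0 < α ∧ X ∈ proxS f α (X + α • V)) ∧ X * V = V * X :=
  statement14_general f hbdd X hX fx hfx V hVsymm hV
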